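/- arXiv:1012.5060 — 2 statements merged into one kernel-verified Lean document; each statement's English description precedes it below -/
import Mathlib

section
/- Let q, p, Ω, π : ℝ → ℝ³ satisfy q' = Ω × q, p' = Ω × p, Ω' = π, π' = -(q × p). Then Ω satisfies the NHP equation Ω''' = Ω × Ω''. -/
/-!
Differentiating twice gives `Ω'' = π' = -(q × p)`. Since `Ω × ·` is a derivation of the cross
product (the Jacobi identity, `leibniz_cross`), the product of two vectors that rotate with angular
velocity `Ω` rotates with it as well, so `(q × p)' = Ω × (q × p)` and hence `Ω''' = Ω × Ω''`.
-/

open Matrix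

section CrossProductCalculus

variable {𝕜 : Type*} [NontriviallyNormedField 𝕜] [CompleteSpace 𝕜]
  {u v : 𝕜 → Fin 3 → 𝕜} {u' v' : Fin 3 → 𝕜} {t : 𝕜}

theorem HasDerivAt.cross (hu : HasDerivAt u u' t) (hv : HasDerivAt v v' t) :
    HasDerivAt (fun s => u s ⨯₃ v s) (u' ⨯₃ v t + u t ⨯₃ v') t := by
  rw [add_comm]
  exact (crossProduct (R := 𝕜)).toContinuousBilinearMap.hasDerivAt_of_bilinear
    (fun _ => hu) (fun _ => hv)

theorem HasDerivAt.cross_of_rotating {Ω : Fin 3 → 𝕜} (hu : HasDerivAt u (Ω ⨯₃ u t) t)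
    (hv : HasDerivAt v (Ω ⨯₃ v t) t) :
    HasDerivAt (fun s => u s ⨯₃ v s) (Ω ⨯₃ (u t ⨯₃ v t)) t := by
  convert hu.cross hv using 1
  exact leibniz_cross Ω (u t) (v t)

end CrossProductCalculus

theorem stmt5_general (q p Ω π : ℝ → Fin 3 → ℝ)
    (hq : Differentiable ℝ q) (hp : Differentiable ℝ p)
    (heq_q : ∀ t, deriv q t = crossProduct (Ω t) (q t))
    (heq_p : ∀ t, deriv p t = crossProduct (Ω t) (p t))
    (heq_Ω : ∀ t, deriv Ω t = π t)
    (heq_π : ∀ t, deriv π t = -(crossProduct (q t) (p t))) :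
    ∀ t, deriv (deriv (deriv Ω)) t =
      crossProduct (Ω t) (deriv (deriv Ω) t) := by
  have hΩ'' : deriv (deriv Ω) = fun t => -(q t ⨯₃ p t) := by
    rw [funext heq_Ω]
    exact funext heq_π
  intro t
  have hqp : HasDerivAt (fun s => q s ⨯₃ p s) (Ω t ⨯₃ (q t ⨯₃ p t)) t :=
    .cross_of_rotating (heq_q t ▸ (hq t).hasDerivAt) (heq_p t ▸ (hp t).hasDerivAt)
  rw [hΩ'', hqp.fun_neg.deriv, map_neg]

/-- The canonical equations imply the NHP equation Ω''' = Ω × Ω''. -/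
theorem stmt5 (q p Ω π : ℝ → Fin 3 → ℝ)
    (hq : Differentiable ℝ q) (hp : Differentiable ℝ p)
    (hΩ : Differentiable ℝ Ω) (hπ : Differentiable ℝ π)
    (heq_q : ∀ t, deriv q t = crossProduct (Ω t) (q t))
    (heq_p : ∀ t, deriv p t = crossProduct (Ω t) (p t))
    (heq_Ω : ∀ t, deriv Ω t = π t)
    (heq_π : ∀ t, deriv π t = -(crossProduct (q t) (p t))) :
    ∀ t, deriv (deriv (deriv Ω)) t =
      crossProduct (Ω t) (deriv (deriv Ω) t) :=
  stmt5_general q p Ω π hq hp heq_q heq_p heq_Ω heq_π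
end

section
/- Let Ω, π₁, π₂ : ℝ → ℝ³ satisfy the Ostrogradsky–Lie–Poisson equations for the reduced Hamiltonian h(π₁, Ω, π₂) = ½|π₂|² + π₁ ⬝ Ω on 𝔰𝔬(3)* × T*𝔰𝔬(3) ≅ (ℝ³)³: namely π₁' = π₁ × (δh/δπ₁) = π₁ × Ω, Ω' = δh/δπ₂ = π₂, π₂' = -δh/δΩ = -π₁. Then Ω satisfies Ω''' = -(Ω × Ω''). -/
theorem stmt17_general (Ω π₁ π₂ : ℝ → Fin 3 → ℝ)
    (h1 : ∀ t, deriv π₁ t = crossProduct (π₁ t) (Ω t))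
    (h2 : ∀ t, deriv Ω t = π₂ t)
    (h3 : ∀ t, deriv π₂ t = -π₁ t) :
    ∀ t, deriv (deriv (deriv Ω)) t =
      -(crossProduct (Ω t) (deriv (deriv Ω) t)) := by
  have hΩ'' : deriv (deriv Ω) = -π₁ := by
    rw [funext h2]
    exact funext h3
  intro t
  simp only [hΩ'', deriv.neg', h1, Pi.neg_apply, map_neg, cross_anticomm]

/-- The Ostrogradsky–Lie–Poisson equations for h = ½|π₂|² + π₁ ⬝ Ω on
𝔰𝔬(3)* × T*𝔰𝔬(3) ≅ (ℝ³)³ imply Ω''' = -(Ω × Ω''). -/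
theorem stmt17 (Ω π₁ π₂ : ℝ → Fin 3 → ℝ)
    (hΩ : Differentiable ℝ Ω) (hπ₁ : Differentiable ℝ π₁)
    (hπ₂ : Differentiable ℝ π₂)
    (h1 : ∀ t, deriv π₁ t = crossProduct (π₁ t) (Ω t))
    (h2 : ∀ t, deriv Ω t = π₂ t)
    (h3 : ∀ t, deriv π₂ t = -π₁ t) :
    ∀ t, deriv (deriv (deriv Ω)) t =
      -(crossProduct (Ω t) (deriv (deriv Ω) t)) :=
  stmt17_general Ω π₁ π₂ h1 h2 h3
end
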